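/- A node s has at least one affected target if and only if it is an affected source of v: {s ∈ V : T(s) ≠ ∅} = S(v) = {s ∈ V : d(s,u) < ∞ and d(s,u) + ω'(u,v) ≤ d(s,v)}. -/

import Mathlib

/-!
The update only adds or shortens the edge `(u,v)`, so every path of `G'` that is new or got
shorter passes through `(u,v)`. If `d(s,u) = ∞` or `d(s,v) < d(s,u) + ω'(u,v)`, such an
`s`-`t` path is strictly longer than `d(s,t)`: replacing its initial segment up to `v` by a
shortest `s`-`v` path of `G` gives a walk of `G` that is shorter, and a walk is never shorter than
a path obtained from it by cutting out cycles. Hence no distance or shortest path from `s`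
changes, and `T(s) = ∅`. Otherwise, appending `(u,v)` to a shortest `s`-`u` path of `G` gives an
`s`-`v` path of `G'` of length at most `d(s,v)` that is not a shortest path of `G`; so either
`d'(s,v) < d(s,v)`, or the shortest `s`-`v` paths of `G` form a proper subset of those of `G'`.
-/

open scoped BigOperators

/-- A directed graph on vertex set `V` with positive real edge weights. -/
structure WDigraph (V : Type*) where
  /-- the edge relation -/
  E : V → V → Prop
  /-- the edge weights -/
  w : V → V → ℝ
  /-- weights of edges are positive -/
  pos : ∀ a b, E a b → 0 < w a b

namespace WDigraph

variable {V : Type*} [Fintype V] [DecidableEq V]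

/-- `p` is a simple path from `s` to `t` in `G`: a nonempty list of pairwise
distinct vertices starting at `s`, ending at `t`, consecutive vertices joined
by edges. (Since all weights are positive, every shortest path is simple, so
it suffices to consider simple paths throughout.) -/
def IsPath (G : WDigraph V) (s t : V) (p : List V) : Prop :=
  List.Chain' G.E p ∧ p.head? = some s ∧ p.getLast? = some t ∧ p.Nodup

/-- The total weight of a list of vertices (sum of the weights of consecutive pairs). -/
def pw (G : WDigraph V) : List V → ℝ
  | [] => 0
  | [_] => 0
  | a :: b :: r => G.w a b + G.pw (b :: r)

/-- `d(s,t)`: shortest-path distance from `s` to `t`, equal to `⊤` (infinity)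
if `t` is unreachable from `s`. -/
noncomputable def dist (G : WDigraph V) (s t : V) : EReal :=
  sInf ((fun p => (G.pw p : EReal)) '' {p | G.IsPath s t p})

/-- The set of shortest `s`-`t` paths in `G`. -/
def SP (G : WDigraph V) (s t : V) : Set (List V) :=
  {p | G.IsPath s t p ∧ (G.pw p : EReal) = G.dist s t}

/-- `σ_{st}`: the number of shortest `s`-`t` paths in `G`. -/
noncomputable def sigma (G : WDigraph V) (s t : V) : ℕ :=
  (G.SP s t).ncard

/-- `σ_{st}(v)`: the number of shortest `s`-`t` paths in `G` that contain `v`. -/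
noncomputable def sigmaV (G : WDigraph V) (s t v : V) : ℕ :=
  {p ∈ G.SP s t | v ∈ p}.ncard

/-- `σ_{st}(v,w)`: the number of shortest `s`-`t` paths in `G` using the edge `(v,w)`. -/
noncomputable def sigmaE (G : WDigraph V) (s t v w : V) : ℕ :=
  {p ∈ G.SP s t | [v, w] <:+: p}.ncard

/-- `P_s(t)`: the set of predecessors of `t` with respect to source `s`:
nodes `y` with `(y,t) ∈ E` and `d(s,y) + ω(y,t) = d(s,t) < ∞`. -/
def pred (G : WDigraph V) (s t : V) : Set V :=
  {y | G.E y t ∧ G.dist s y + (G.w y t : EReal) = G.dist s t ∧ G.dist s t < ⊤}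

/-- `δ_{s•}(v)`: Brandes's one-sided dependency of `s` on `v`
(a summand is `0` whenever its denominator is `0`, which is automatic since
in Lean division by zero yields zero). -/
noncomputable def delta (G : WDigraph V) (s v : V) : ℝ :=
  ∑ᶠ t ∈ {t : V | t ≠ s ∧ t ≠ v}, (G.sigmaV s t v : ℝ) / (G.sigma s t : ℝ)

/-- `c_B(v)`: the betweenness centrality of `v`. -/
noncomputable def bc (G : WDigraph V) (v : V) : ℝ :=
  ∑ᶠ s ∈ {s : V | s ≠ v}, G.delta s v

/-- `G'` is obtained from `G` by the incremental update `(u, v, ω'(u,v))`: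
either a new edge `(u,v) ∉ E` is inserted with positive weight, or the weight
of the existing edge `(u,v)` is decreased; all other edges and weights are
unchanged. (Positivity of all weights is part of the `WDigraph` structure.) -/
structure IsUpdate (G G' : WDigraph V) (u v : V) : Prop where
  /-- the updated edge is present in `G'` -/
  edge' : G'.E u v
  /-- `E' = E ∪ {(u,v)}` -/
  edge_iff : ∀ a b, G'.E a b ↔ G.E a b ∨ a = u ∧ b = v
  /-- `ω'` agrees with `ω` on all edges other than `(u,v)` -/
  weight_eq : ∀ a b, ¬(a = u ∧ b = v) → G'.w a b = G.w a b
  /-- either an insertion of a new edge, or a weight decrease of an existing one -/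
  insert_or_decrease : ¬ G.E u v ∨ (G.E u v ∧ G'.w u v < G.w u v)

/-- `S(t)`: the affected sources of `t`. -/
def affS (G G' : WDigraph V) (t : V) : Set V :=
  {s | G.dist s t > G'.dist s t ∨ G.sigma s t ≠ G'.sigma s t}

/-- `T(s)`: the affected targets of `s`. -/
def affT (G G' : WDigraph V) (s : V) : Set V :=
  {t | G.dist s t > G'.dist s t ∨ G.sigma s t ≠ G'.sigma s t}

/-- `Δ_{s•}(v) = Σ_{t ∈ T(s), t ≠ v} σ_{st}(v)/σ_{st}`, computed in `G`
(`0`-convention for zero denominators). -/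
noncomputable def Delta (G G' : WDigraph V) (s v : V) : ℝ :=
  ∑ᶠ t ∈ {t : V | t ∈ affT G G' s ∧ t ≠ v}, (G.sigmaV s t v : ℝ) / (G.sigma s t : ℝ)

/-- `Δ'_{s•}(v) = Σ_{t ∈ T(s), t ≠ v} σ'_{st}(v)/σ'_{st}`, computed in `G'`
(`0`-convention for zero denominators). -/
noncomputable def Delta' (G G' : WDigraph V) (s v : V) : ℝ :=
  ∑ᶠ t ∈ {t : V | t ∈ affT G G' s ∧ t ≠ v}, (G'.sigmaV s t v : ℝ) / (G'.sigma s t : ℝ)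

def IsWalk (G : WDigraph V) (s t : V) (p : List V) : Prop :=
  p.IsChain G.E ∧ p.head? = some s ∧ p.getLast? = some t

section Paths

omit [Fintype V] [DecidableEq V]

variable {G : WDigraph V} {s t x : V}

theorem IsPath.isWalk {p : List V} (hp : G.IsPath s t p) : G.IsWalk s t p :=
  ⟨hp.1, hp.2.1, hp.2.2.1⟩

theorem pw_cons_cons (a b : V) (l : List V) : G.pw (a :: b :: l) = G.w a b + G.pw (b :: l) :=
  rfl

theorem pw_append_cons : ∀ (l₁ : List V) (x : V) (l₂ : List V),
    G.pw (l₁ ++ x :: l₂) = G.pw (l₁ ++ [x]) + G.pw (x :: l₂)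
  | [], _, _ => by simp [pw]
  | [_], _, _ => by simp [pw]
  | a :: b :: r, x, l₂ => by
    have ih := pw_append_cons (b :: r) x l₂
    simp only [List.cons_append] at ih ⊢
    rw [pw_cons_cons, pw_cons_cons, ih, add_assoc]

theorem pw_append_singleton {q : List V} (hq : q.getLast? = some x) (y : V) :
    G.pw (q ++ [y]) = G.pw q + G.w x y := by
  obtain ⟨c, rfl⟩ := List.getLast?_eq_some_iff.mp hq
  rw [List.append_assoc, List.singleton_append, pw_append_cons]
  simp [pw]

theorem pw_nonneg : ∀ {p : List V}, p.IsChain G.E → 0 ≤ G.pw p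
  | [], _ => le_rfl
  | [_], _ => le_rfl
  | a :: b :: _, hp => by
    rw [List.isChain_cons_cons] at hp
    rw [pw_cons_cons]
    exact add_nonneg (G.pos a b hp.1).le (pw_nonneg hp.2)

theorem pw_prefix_le {l₁ l₂ : List V} (hp : (l₁ ++ x :: l₂).IsChain G.E) :
    G.pw (l₁ ++ [x]) ≤ G.pw (l₁ ++ x :: l₂) := by
  rw [pw_append_cons l₁ x l₂]
  exact le_add_of_nonneg_right (pw_nonneg (hp.suffix ⟨l₁, rfl⟩))

theorem pw_suffix_le {l₁ l₂ : List V} (hp : (l₁ ++ x :: l₂).IsChain G.E) :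
    G.pw (x :: l₂) ≤ G.pw (l₁ ++ x :: l₂) := by
  rw [pw_append_cons l₁ x l₂]
  exact le_add_of_nonneg_left (pw_nonneg (hp.prefix ⟨l₂, by simp⟩))

theorem IsPath.prefix {a b : List V} (hp : G.IsPath s t (a ++ x :: b)) :
    G.IsPath s x (a ++ [x]) := by
  refine ⟨hp.1.prefix ⟨b, by simp⟩, ?_, by simp, hp.2.2.2.sublist (by simp)⟩
  cases a <;> simpa using hp.2.1

theorem IsPath.suffix {a b : List V} (hp : G.IsPath s t (a ++ x :: b)) :
    G.IsPath x t (x :: b) := by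
  refine ⟨hp.1.suffix ⟨a, rfl⟩, rfl, ?_, hp.2.2.2.sublist (List.sublist_append_right a _)⟩
  simpa [List.getLast?_append] using hp.2.2.1

theorem IsPath.not_infix_cons_target {p : List V} (hp : G.IsPath s t p) (y : V) :
    ¬ [t, y] <:+: p := by
  rintro ⟨a, b, rfl⟩
  have hnd : (t :: y :: b).Nodup := hp.2.2.2.sublist (by simp)
  have hlast : (y :: b).getLast? = some t := by
    simpa [List.getLast?_append_cons] using hp.2.2.1
  exact (List.nodup_cons.mp hnd).1 (List.mem_of_getLast? hlast)

theorem IsWalk.append {a b : List V} (hp : G.IsWalk s x (a ++ [x])) (hq : G.IsWalk x t (x :: b)) :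
    G.IsWalk s t (a ++ x :: b) := by
  refine ⟨?_, ?_, ?_⟩
  · simpa using hp.1.append_overlap (l₃ := b) (by simpa using hq.1) (List.cons_ne_nil x [])
  · cases a <;> simpa using hp.2.1
  · simpa [List.getLast?_append] using hq.2.2

theorem exists_isPath_pw_le_of_isWalk : ∀ {p : List V} {s : V}, G.IsWalk s t p →
    ∃ q, G.IsPath s t q ∧ G.pw q ≤ G.pw p
  | [], _, hp => by simp [IsWalk] at hp
  | [a], s, hp => by
    obtain ⟨-, hs, ht⟩ := hp
    simp only [List.head?_cons, List.getLast?_singleton, Option.some.injEq] at hs ht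
    subst hs ht
    exact ⟨[a], ⟨List.isChain_singleton a, rfl, rfl, List.nodup_singleton a⟩, le_rfl⟩
  | x :: y :: r, s, ⟨hc, hs, ht⟩ => by
    simp only [List.head?_cons, Option.some.injEq] at hs
    subst hs
    rw [List.isChain_cons_cons] at hc
    obtain ⟨q, hq, hqw⟩ :=
      exists_isPath_pw_le_of_isWalk (s := y) ⟨hc.2, rfl, by simpa using ht⟩
    have hxy := G.pos x y hc.1
    rw [pw_cons_cons]
    by_cases hx : x ∈ q
    · -- cut off the cycle that returns to `x`
      obtain ⟨a, b, rfl⟩ := List.append_of_mem hx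
      exact ⟨x :: b, hq.suffix, by linarith [pw_suffix_le hq.1]⟩
    · obtain ⟨q', rfl⟩ := List.head?_eq_some_iff.mp hq.2.1
      refine ⟨x :: y :: q', ⟨hq.1.cons_cons hc.1, rfl, ?_, List.nodup_cons.mpr ⟨hx, hq.2.2.2⟩⟩, ?_⟩
      · rw [List.getLast?_cons_cons]; exact hq.2.2.1
      · rw [pw_cons_cons]; linarith

theorem dist_le_pw {p : List V} (hp : G.IsPath s t p) : G.dist s t ≤ G.pw p :=
  sInf_le ⟨p, hp, rfl⟩

theorem dist_le_pw_of_isWalk {p : List V} (hp : G.IsWalk s t p) : G.dist s t ≤ G.pw p := by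
  obtain ⟨q, hq, hqp⟩ := exists_isPath_pw_le_of_isWalk hp
  exact (dist_le_pw hq).trans (EReal.coe_le_coe_iff.mpr hqp)

theorem dist_lt_top_of_isPath {p : List V} (hp : G.IsPath s t p) : G.dist s t < ⊤ :=
  (dist_le_pw hp).trans_lt (EReal.coe_lt_top _)

theorem notMem_of_mem_SP_of_dist_lt {q : List V} (hq : q ∈ G.SP s t)
    (hlt : G.dist s t < G.dist s x) : x ∉ q := by
  intro hx
  obtain ⟨a, b, rfl⟩ := List.append_of_mem hx
  have : G.dist s x ≤ G.dist s t := calc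
    G.dist s x ≤ G.pw (a ++ [x]) := dist_le_pw hq.1.prefix
    _ ≤ G.pw (a ++ x :: b) := EReal.coe_le_coe_iff.mpr (pw_prefix_le hq.1.1)
    _ = G.dist s t := hq.2
  exact this.not_gt hlt

end Paths

section Finite

omit [DecidableEq V]

variable {G : WDigraph V} {s t : V}

theorem finite_setOf_isPath (s t : V) : {p | G.IsPath s t p}.Finite :=
  (List.finite_length_le V (Fintype.card V)).subset fun _ hp => hp.2.2.2.length_le_card

theorem finite_SP (s t : V) : (G.SP s t).Finite :=
  (finite_setOf_isPath s t).subset fun _ hp => hp.1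

theorem nonempty_SP (h : G.dist s t < ⊤) : (G.SP s t).Nonempty := by
  have hne : ((fun p => (G.pw p : EReal)) '' {p | G.IsPath s t p}).Nonempty := by
    by_contra hemp
    rw [Set.not_nonempty_iff_eq_empty] at hemp
    rw [dist, hemp, sInf_empty] at h
    exact lt_irrefl _ h
  obtain ⟨p, hp, hpw⟩ := hne.csInf_mem ((finite_setOf_isPath s t).image _)
  exact ⟨p, hp, hpw⟩

end Finite

namespace IsUpdate

omit [DecidableEq V]

variable {G G' : WDigraph V} {u v s t : V} {p : List V}

section

omit [Fintype V]

theorem w_lt (h : IsUpdate G G' u v) (huv : G.E u v) : G'.w u v < G.w u v :=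
  h.insert_or_decrease.elim (absurd huv) And.right

theorem isChain (h : IsUpdate G G' u v) (hp : p.IsChain G.E) : p.IsChain G'.E :=
  hp.imp fun a b hab => (h.edge_iff a b).mpr (Or.inl hab)

theorem isPath (h : IsUpdate G G' u v) (hp : G.IsPath s t p) : G'.IsPath s t p :=
  ⟨h.isChain hp.1, hp.2⟩

theorem pw_le (h : IsUpdate G G' u v) : ∀ {p : List V}, p.IsChain G.E → G'.pw p ≤ G.pw p
  | [], _ => le_rfl
  | [_], _ => le_rfl
  | a :: b :: _, hp => by
    rw [List.isChain_cons_cons] at hp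
    rw [pw_cons_cons, pw_cons_cons]
    refine add_le_add ?_ (h.pw_le hp.2)
    by_cases hab : a = u ∧ b = v
    · obtain ⟨rfl, rfl⟩ := hab
      exact (h.w_lt hp.1).le
    · exact (h.weight_eq a b hab).le

theorem pw_eq_of_not_infix (h : IsUpdate G G' u v) :
    ∀ {p : List V}, ¬ [u, v] <:+: p → G'.pw p = G.pw p
  | [], _ => rfl
  | [_], _ => rfl
  | a :: b :: r, hni => by
    have hab : ¬ (a = u ∧ b = v) := by
      rintro ⟨rfl, rfl⟩
      exact hni ⟨[], r, rfl⟩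
    rw [pw_cons_cons, pw_cons_cons, h.weight_eq a b hab,
      h.pw_eq_of_not_infix fun hi => hni (hi.trans (List.suffix_cons a _).isInfix)]

theorem isChain_of_not_infix (h : IsUpdate G G' u v) :
    ∀ {p : List V}, p.IsChain G'.E → ¬ [u, v] <:+: p → p.IsChain G.E
  | [], _, _ => List.isChain_nil
  | [_], _, _ => List.isChain_singleton _
  | a :: b :: r, hp, hni => by
    rw [List.isChain_cons_cons] at hp
    refine List.IsChain.cons_cons ?_
      (h.isChain_of_not_infix hp.2 fun hi => hni (hi.trans (List.suffix_cons a _).isInfix))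
    rcases (h.edge_iff a b).mp hp.1 with hab | ⟨rfl, rfl⟩
    · exact hab
    · exact absurd ⟨[], r, rfl⟩ hni

theorem isPath_of_not_infix (h : IsUpdate G G' u v) (hp : G'.IsPath s t p)
    (hni : ¬ [u, v] <:+: p) : G.IsPath s t p :=
  ⟨h.isChain_of_not_infix hp.1 hni, hp.2⟩

theorem isPath_append_of_notMem (h : IsUpdate G G' u v) (hp : G.IsPath s u p) (hv : v ∉ p) :
    G'.IsPath s v (p ++ [v]) := by
  refine ⟨List.isChain_append.mpr ⟨h.isChain hp.1, List.isChain_singleton v, ?_⟩, ?_, by simp, ?_⟩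
  · simpa [hp.2.2.1] using h.edge'
  · simp [List.head?_append, hp.2.1]
  · simpa [List.nodup_append] using ⟨hp.2.2.2, fun a ha hav => hv (hav ▸ ha)⟩

theorem dist_le (h : IsUpdate G G' u v) (s t : V) : G'.dist s t ≤ G.dist s t :=
  le_sInf <| by
    rintro _ ⟨p, hp, rfl⟩
    exact (dist_le_pw (h.isPath hp)).trans (EReal.coe_le_coe_iff.mpr (h.pw_le hp.1))

theorem SP_subset_of_dist_eq (h : IsUpdate G G' u v) (hd : G'.dist s t = G.dist s t) :
    G.SP s t ⊆ G'.SP s t := by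
  rintro p ⟨hp, hpw⟩
  refine ⟨h.isPath hp, le_antisymm ?_ (dist_le_pw (h.isPath hp))⟩
  rw [hd, ← hpw]
  exact EReal.coe_le_coe_iff.mpr (h.pw_le hp.1)

end

theorem dist_lt_pw_of_infix (h : IsUpdate G G' u v)
    (hsv : G.dist s u < ⊤ → G.dist s v < G.dist s u + G'.w u v)
    (hp : G'.IsPath s t p) (huv : [u, v] <:+: p) : G.dist s t < G'.pw p := by
  obtain ⟨a, b, rfl⟩ : ∃ a b, p = a ++ u :: v :: b := by
    obtain ⟨a, b, rfl⟩ := huv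
    exact ⟨a, b, by simp⟩
  have hpre : G.IsPath s u (a ++ [u]) :=
    h.isPath_of_not_infix hp.prefix (hp.prefix.not_infix_cons_target v)
  have hsuf' : G'.IsPath v t (v :: b) := hp.suffix.suffix (a := [u])
  have hu : u ∉ v :: b := (List.nodup_cons.mp hp.suffix.2.2.2).1
  have hsuf : G.IsPath v t (v :: b) :=
    h.isPath_of_not_infix hsuf' fun hi => hu (hi.subset (by simp))
  have hlt := hsv (dist_lt_top_of_isPath hpre)
  obtain ⟨q, hq, hqw⟩ := nonempty_SP (lt_top_of_lt hlt)
  have hq_lt : G.pw q < G.pw (a ++ [u]) + G'.w u v := by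
    have : (G.pw q : EReal) < G.pw (a ++ [u]) + G'.w u v :=
      calc (G.pw q : EReal) = G.dist s v := hqw
        _ < G.dist s u + G'.w u v := hlt
        _ ≤ G.pw (a ++ [u]) + G'.w u v := by gcongr; exact dist_le_pw hpre
    exact_mod_cast this
  have hpw : G'.pw (a ++ u :: v :: b) = G.pw (a ++ [u]) + G'.w u v + G.pw (v :: b) := by
    rw [pw_append_cons, pw_cons_cons, h.pw_eq_of_not_infix (hpre.not_infix_cons_target v),
      h.pw_eq_of_not_infix fun hi => hu (hi.subset (by simp)), add_assoc]
  obtain ⟨c, rfl⟩ := List.getLast?_eq_some_iff.mp hq.2.2.1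
  calc G.dist s t ≤ G.pw (c ++ v :: b) := dist_le_pw_of_isWalk (hq.isWalk.append hsuf.isWalk)
    _ < G'.pw (a ++ u :: v :: b) := by
      rw [pw_append_cons, hpw, EReal.coe_lt_coe_iff]
      linarith

theorem dist_eq_of_lt (h : IsUpdate G G' u v)
    (hsv : G.dist s u < ⊤ → G.dist s v < G.dist s u + G'.w u v) (t : V) :
    G'.dist s t = G.dist s t := by
  refine le_antisymm (h.dist_le s t) (le_sInf ?_)
  rintro _ ⟨p, hp, rfl⟩
  show G.dist s t ≤ (G'.pw p : EReal)
  by_cases huv : [u, v] <:+: p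
  · exact (h.dist_lt_pw_of_infix hsv hp huv).le
  · rw [h.pw_eq_of_not_infix huv]
    exact dist_le_pw (h.isPath_of_not_infix hp huv)

theorem SP_eq_of_lt (h : IsUpdate G G' u v)
    (hsv : G.dist s u < ⊤ → G.dist s v < G.dist s u + G'.w u v) (t : V) :
    G'.SP s t = G.SP s t := by
  have hd := h.dist_eq_of_lt hsv t
  refine subset_antisymm ?_ (h.SP_subset_of_dist_eq hd)
  rintro p ⟨hp, hpw⟩
  have huv : ¬ [u, v] <:+: p := fun huv =>
    (h.dist_lt_pw_of_infix hsv hp huv).ne (by rw [hpw, hd])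
  exact ⟨h.isPath_of_not_infix hp huv, by rw [← h.pw_eq_of_not_infix huv, hpw, hd]⟩

theorem affT_eq_empty (h : IsUpdate G G' u v)
    (hsv : G.dist s u < ⊤ → G.dist s v < G.dist s u + G'.w u v) : affT G G' s = ∅ := by
  ext t
  simp [affT, sigma, h.dist_eq_of_lt hsv t, h.SP_eq_of_lt hsv t]

theorem mem_affS (h : IsUpdate G G' u v) (hsu : G.dist s u < ⊤)
    (hsv : G.dist s u + G'.w u v ≤ G.dist s v) : s ∈ affS G G' v := by
  obtain ⟨q, hq, hqw⟩ := nonempty_SP hsu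
  have hvq : v ∉ q := notMem_of_mem_SP_of_dist_lt ⟨hq, hqw⟩ <| calc
    G.dist s u < G.dist s u + G'.w u v := by
      rw [← hqw]
      exact_mod_cast lt_add_of_pos_right _ (G'.pos u v h.edge')
    _ ≤ G.dist s v := hsv
  have hp' := h.isPath_append_of_notMem hq hvq
  have hpw' : G'.pw (q ++ [v]) ≤ G.pw q + G'.w u v := by
    rw [pw_append_singleton hq.2.2.1]
    linarith [h.pw_le hq.1]
  by_contra hs
  simp only [affS, Set.mem_ofPred_eq, not_or, not_lt, not_not] at hs
  have hd : G'.dist s v = G.dist s v := le_antisymm (h.dist_le s v) hs.1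
  have hmem : q ++ [v] ∈ G'.SP s v := by
    refine ⟨hp', le_antisymm ?_ (dist_le_pw hp')⟩
    calc (G'.pw (q ++ [v]) : EReal) ≤ G.pw q + G'.w u v := by exact_mod_cast hpw'
      _ ≤ G'.dist s v := by rwa [hqw, hd]
  have hnmem : q ++ [v] ∉ G.SP s v := by
    rintro ⟨hp, hpw⟩
    have huv : G.E u v := by
      simpa [hq.2.2.1] using (List.isChain_append.mp hp.1).2.2
    have : G.pw (q ++ [v]) = G'.pw (q ++ [v]) := by
      exact_mod_cast hpw.trans (hd.symm.trans hmem.2.symm)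
    rw [pw_append_singleton hq.2.2.1] at this
    linarith [h.w_lt huv]
  have hlt := Set.ncard_lt_ncard ⟨h.SP_subset_of_dist_eq hd, fun hsub => hnmem (hsub hmem)⟩
    (finite_SP s v)
  exact hlt.ne hs.2

end IsUpdate

/-- A node `s` has at least one affected target if and only if it
is an affected source of `v`:
`{s ∈ V : T(s) ≠ ∅} = S(v) = {s ∈ V : d(s,u) < ∞ ∧ d(s,u) + ω'(u,v) ≤ d(s,v)}`. -/
theorem affected_sources_characterization (G G' : WDigraph V) (u v : V)
    (h : IsUpdate G G' u v) :
    {s : V | (affT G G' s).Nonempty} = affS G G' v ∧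
      affS G G' v =
        {s : V | G.dist s u < ⊤ ∧ G.dist s u + (G'.w u v : EReal) ≤ G.dist s v} := by
  have hempty : ∀ s, s ∉ {s : V | G.dist s u < ⊤ ∧ G.dist s u + (G'.w u v : EReal) ≤ G.dist s v} →
      affT G G' s = ∅ := fun s hs =>
    h.affT_eq_empty fun hsu => not_le.mp fun hsv => hs ⟨hsu, hsv⟩
  have hchar : affS G G' v =
      {s : V | G.dist s u < ⊤ ∧ G.dist s u + (G'.w u v : EReal) ≤ G.dist s v} := by
    ext s
    refine ⟨fun hs => ?_, fun hs => h.mem_affS hs.1 hs.2⟩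
    by_contra hsv
    exact (hempty s hsv).subset (show v ∈ affT G G' s from hs)
  refine ⟨?_, hchar⟩
  ext s
  refine ⟨fun ⟨t, ht⟩ => ?_, fun hs => ⟨v, hs⟩⟩
  by_contra hs
  rw [hchar] at hs
  exact (hempty s hs).subset ht

end WDigraph
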